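/- Let M ∈ ℝ^{n×m} and let V₁ ∈ ℝ^{n×R}, V₂ ∈ ℝ^{m×R} have orthonormal columns. Then there exist λ ≥ 0 and W ∈ ℝ^{n×m} with V₁ᵀW = 0, WV₂ = 0 and ‖W‖ ≤ 1 such that ‖λ(V₁V₂ᵀ + W) − M‖_F ≤ 3√R · ‖M‖. -/

import Mathlib

open MeasureTheory ProbabilityTheory Matrix

noncomputable section

def eNorm {ι : Type*} [Fintype ι] (x : ι → ℝ) : ℝ := Real.sqrt (∑ i, x i ^ 2)

def eInner {ι : Type*} [Fintype ι] (x y : ι → ℝ) : ℝ := ∑ i, x i * y i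

def frobNorm {m n : Type*} [Fintype m] [Fintype n] (A : Matrix m n ℝ) : ℝ :=
  Real.sqrt (∑ i, ∑ j, A i j ^ 2)

def frobInner {m n : Type*} [Fintype m] [Fintype n] (A B : Matrix m n ℝ) : ℝ :=
  ∑ i, ∑ j, A i j * B i j

def specNorm {m n : Type*} [Fintype m] [Fintype n] (A : Matrix m n ℝ) : ℝ :=
  sSup {c | ∃ x : n → ℝ, eNorm x ≤ 1 ∧ c = eNorm (A.mulVec x)}

def nucNorm {m n : Type*} [Fintype m] [Fintype n] [DecidableEq n] (A : Matrix m n ℝ) : ℝ :=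
  ∑ i, Real.sqrt (((by simpa only [Matrix.conjTranspose_eq_transpose_of_trivial] using Matrix.isHermitian_conjTranspose_mul_self A :
    (Aᵀ * A).IsHermitian)).eigenvalues i)

def hankel {n : ℕ} (v : Fin (2*n-1) → ℝ) : Matrix (Fin n) (Fin n) ℝ :=
  Matrix.of fun j k => v ⟨(j:ℕ) + k, by omega⟩

def Kw (n : ℕ) (j : Fin (2*n-1)) : ℝ :=
  if (j:ℕ) + 1 ≤ n then Real.sqrt ((j:ℕ) + 1) else Real.sqrt (2*n - ((j:ℕ)+1))

def wHankel {n p : ℕ} (β : Fin (2*n-1) × Fin p → ℝ) : Matrix (Fin n) (Fin n × Fin p) ℝ :=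
  Matrix.of fun j kl => β (⟨(j:ℕ) + kl.1, by omega⟩, kl.2) / Kw n ⟨(j:ℕ) + kl.1, by omega⟩

def blockHankel {n p : ℕ} (h : Fin (2*n-1) × Fin p → ℝ) : Matrix (Fin n) (Fin n × Fin p) ℝ :=
  Matrix.of fun j kl => h (⟨(j:ℕ) + kl.1, by omega⟩, kl.2)

def stdGaussian (ι : Type*) [Fintype ι] : Measure (ι → ℝ) :=
  Measure.pi fun _ => gaussianReal 0 1

def gaussWidth {ι : Type*} [Fintype ι] (S : Set (ι → ℝ)) : ℝ :=
  ∫ g, sSup ((fun γ => eInner γ g) '' S) ∂ stdGaussian ι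

/-!
Take `λ = ‖M‖` and `W = P_W(M) / ‖M‖`. Since `I - V₁V₁ᵀ` and `I - V₂V₂ᵀ` are orthogonal
projections, `‖W‖ ≤ 1`, and `λ(V₁V₂ᵀ + W) - M = ‖M‖ V₁V₂ᵀ - P_V(M)`. Writing
`P_V(M) = V₁V₁ᵀM + (I - V₁V₁ᵀ)MV₂V₂ᵀ` and using `‖AB‖_F ≤ ‖A‖_F ‖B‖`, `‖AB‖_F ≤ ‖A‖ ‖B‖_F` and
`‖V V'ᵀ‖_F ≤ √R` for `V, V'` with orthonormal columns, each of the three terms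
`‖M‖V₁V₂ᵀ`, `V₁V₁ᵀM`, `(I - V₁V₁ᵀ)MV₂V₂ᵀ` has Frobenius norm at most `√R ‖M‖`.
-/

variable {ι κ ρ : Type*} [Fintype ι] [Fintype κ] [Fintype ρ]

theorem eNorm_eq_norm (x : ι → ℝ) : eNorm x = ‖WithLp.toLp 2 x‖ := by
  simp [eNorm, EuclideanSpace.norm_eq]

theorem eNorm_nonneg (x : ι → ℝ) : 0 ≤ eNorm x := Real.sqrt_nonneg _

section L2Operator

open scoped Matrix.Norms.L2Operator

theorem specNorm_eq_l2_opNorm [DecidableEq κ] (A : Matrix ι κ ℝ) : specNorm A = ‖A‖ := by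
  rw [l2_opNorm_def, ← ContinuousLinearMap.sSup_unitClosedBall_eq_norm, specNorm]
  congr 1
  ext c
  simp only [eNorm_eq_norm, Set.mem_ofPred_eq, Set.mem_image, Metric.mem_closedBall,
    dist_zero_right]
  constructor
  · rintro ⟨x, hx, rfl⟩
    exact ⟨WithLp.toLp 2 x, hx, rfl⟩
  · rintro ⟨x, hx, rfl⟩
    exact ⟨x.ofLp, hx, rfl⟩

theorem eNorm_mulVec_le (A : Matrix ι κ ℝ) (x : κ → ℝ) :
    eNorm (A *ᵥ x) ≤ specNorm A * eNorm x := by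
  classical
  simpa [eNorm_eq_norm, specNorm_eq_l2_opNorm] using A.l2_opNorm_mulVec (WithLp.toLp 2 x)

theorem specNorm_nonneg (A : Matrix ι κ ℝ) : 0 ≤ specNorm A := by
  classical
  exact specNorm_eq_l2_opNorm A ▸ norm_nonneg A

theorem specNorm_eq_zero_iff (A : Matrix ι κ ℝ) : specNorm A = 0 ↔ A = 0 := by
  classical
  rw [specNorm_eq_l2_opNorm, norm_eq_zero]

theorem specNorm_smul (c : ℝ) (A : Matrix ι κ ℝ) : specNorm (c • A) = |c| * specNorm A := by
  classical
  simp only [specNorm_eq_l2_opNorm]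
  exact norm_smul c A

theorem specNorm_mul_le (A : Matrix ι κ ℝ) (B : Matrix κ ρ ℝ) :
    specNorm (A * B) ≤ specNorm A * specNorm B := by
  classical
  simpa only [specNorm_eq_l2_opNorm] using A.l2_opNorm_mul B

theorem specNorm_transpose (A : Matrix ι κ ℝ) : specNorm Aᵀ = specNorm A := by
  classical
  simpa only [specNorm_eq_l2_opNorm, conjTranspose_eq_transpose_of_trivial] using
    A.l2_opNorm_conjTranspose

theorem specNorm_transpose_mul_self (A : Matrix ι κ ℝ) : specNorm (Aᵀ * A) = specNorm A ^ 2 := by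
  classical
  simpa only [specNorm_eq_l2_opNorm, conjTranspose_eq_transpose_of_trivial, sq] using
    A.l2_opNorm_conjTranspose_mul_self

theorem specNorm_one_le [DecidableEq ι] : specNorm (1 : Matrix ι ι ℝ) ≤ 1 := by
  rw [specNorm_eq_l2_opNorm, ← l2_opNorm_toEuclideanCLM, map_one]
  exact ContinuousLinearMap.norm_id_le

end L2Operator

theorem smul_inv_smul_of_specNorm_le {c : ℝ} {B : Matrix ι κ ℝ} (hB : specNorm B ≤ c) :
    c • c⁻¹ • B = B := by
  rcases eq_or_ne c 0 with rfl | hc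
  · simp [(specNorm_eq_zero_iff B).1 (le_antisymm hB (specNorm_nonneg B))]
  · exact smul_inv_smul₀ hc B

theorem specNorm_inv_smul_le_one_of_specNorm_le {c : ℝ} {B : Matrix ι κ ℝ}
    (hB : specNorm B ≤ c) : specNorm (c⁻¹ • B) ≤ 1 := by
  have hc : 0 ≤ c := (specNorm_nonneg B).trans hB
  rw [specNorm_smul, abs_inv, abs_of_nonneg hc]
  exact inv_mul_le_one_of_le₀ hB hc

section Frobenius

attribute [local instance] Matrix.frobeniusNormedAddCommGroup Matrix.frobeniusNormedSpace

theorem frobNorm_eq_norm (A : Matrix ι κ ℝ) : frobNorm A = ‖A‖ := by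
  simp [frobNorm, frobenius_norm_def, Real.sqrt_eq_rpow]

theorem frobNorm_nonneg (A : Matrix ι κ ℝ) : 0 ≤ frobNorm A :=
  frobNorm_eq_norm A ▸ norm_nonneg A

theorem frobNorm_smul (c : ℝ) (A : Matrix ι κ ℝ) : frobNorm (c • A) = |c| * frobNorm A := by
  simp only [frobNorm_eq_norm]
  exact norm_smul c A

theorem frobNorm_add_le (A B : Matrix ι κ ℝ) : frobNorm (A + B) ≤ frobNorm A + frobNorm B := by
  simp only [frobNorm_eq_norm]
  exact norm_add_le A B

theorem frobNorm_sub_le (A B : Matrix ι κ ℝ) : frobNorm (A - B) ≤ frobNorm A + frobNorm B := by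
  simp only [frobNorm_eq_norm]
  exact norm_sub_le A B

theorem frobNorm_transpose (A : Matrix ι κ ℝ) : frobNorm Aᵀ = frobNorm A := by
  simp only [frobNorm_eq_norm]
  exact frobenius_norm_transpose A

end Frobenius

theorem frobNorm_sq_eq_sum_eNorm_sq (A : Matrix ι κ ℝ) : frobNorm A ^ 2 = ∑ i, eNorm (A i) ^ 2 := by
  simp only [frobNorm, eNorm]
  rw [Real.sq_sqrt (by positivity)]
  exact Finset.sum_congr rfl fun i _ => (Real.sq_sqrt (by positivity)).symm

theorem frobNorm_mul_le_frobNorm_mul_specNorm (A : Matrix ι κ ℝ) (B : Matrix κ ρ ℝ) :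
    frobNorm (A * B) ≤ frobNorm A * specNorm B := by
  have hrow (i : ι) : eNorm ((A * B) i) ≤ specNorm B * eNorm (A i) := by
    rw [← specNorm_transpose, show (A * B) i = Bᵀ *ᵥ A i from (mulVec_transpose B (A i)).symm]
    exact eNorm_mulVec_le _ _
  refine (pow_le_pow_iff_left₀ (frobNorm_nonneg _)
    (mul_nonneg (frobNorm_nonneg A) (specNorm_nonneg B)) two_ne_zero).1 ?_
  rw [frobNorm_sq_eq_sum_eNorm_sq, mul_pow, frobNorm_sq_eq_sum_eNorm_sq, Finset.sum_mul]
  refine Finset.sum_le_sum fun i _ => ?_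
  rw [← mul_pow, mul_comm]
  exact pow_le_pow_left₀ (eNorm_nonneg _) (hrow i) 2

theorem frobNorm_mul_le_specNorm_mul_frobNorm (A : Matrix ι κ ℝ) (B : Matrix κ ρ ℝ) :
    frobNorm (A * B) ≤ specNorm A * frobNorm B := by
  rw [← frobNorm_transpose, transpose_mul, ← frobNorm_transpose B, ← specNorm_transpose A, mul_comm]
  exact frobNorm_mul_le_frobNorm_mul_specNorm _ _

theorem frobNorm_sq_eq_trace (A : Matrix ι κ ℝ) : frobNorm A ^ 2 = trace (Aᵀ * A) := by
  rw [frobNorm, Real.sq_sqrt (by positivity), Finset.sum_comm]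
  simp [trace, mul_apply, sq]

theorem specNorm_le_one_of_transpose_mul_self_eq [DecidableEq κ] {A : Matrix κ κ ℝ}
    (hA : Aᵀ * A = A) : specNorm A ≤ 1 := by
  have h := specNorm_transpose_mul_self A
  rw [hA] at h
  nlinarith [specNorm_nonneg A]

section OrthonormalColumns

variable {R : ℕ}

theorem specNorm_le_one_of_transpose_mul_self_eq_one {V : Matrix ι (Fin R) ℝ}
    (hV : Vᵀ * V = 1) : specNorm V ≤ 1 := by
  have h := specNorm_transpose_mul_self V
  rw [hV] at h
  exact (pow_le_one_iff_of_nonneg (specNorm_nonneg V) two_ne_zero).1 (h ▸ specNorm_one_le)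

theorem frobNorm_eq_sqrt_of_transpose_mul_self_eq_one {V : Matrix ι (Fin R) ℝ}
    (hV : Vᵀ * V = 1) : frobNorm V = √R := by
  rw [← Real.sqrt_sq (frobNorm_nonneg V), frobNorm_sq_eq_trace, hV, trace_one, Fintype.card_fin]

theorem frobNorm_mul_transpose_le {V : Matrix ι (Fin R) ℝ} {U : Matrix κ (Fin R) ℝ}
    (hV : Vᵀ * V = 1) (hU : Uᵀ * U = 1) : frobNorm (V * Uᵀ) ≤ √R :=
  calc frobNorm (V * Uᵀ) ≤ specNorm V * frobNorm Uᵀ := frobNorm_mul_le_specNorm_mul_frobNorm _ _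
    _ ≤ 1 * √R := by
      rw [frobNorm_transpose, frobNorm_eq_sqrt_of_transpose_mul_self_eq_one hU]
      gcongr
      exact specNorm_le_one_of_transpose_mul_self_eq_one hV
    _ = √R := one_mul _

variable [DecidableEq ι] {V : Matrix ι (Fin R) ℝ}

theorem transpose_mul_one_sub_mul_transpose (hV : Vᵀ * V = 1) : Vᵀ * (1 - V * Vᵀ) = 0 := by
  rw [Matrix.mul_sub, Matrix.mul_one, ← Matrix.mul_assoc, hV, Matrix.one_mul, sub_self]

theorem one_sub_mul_transpose_mul (hV : Vᵀ * V = 1) : (1 - V * Vᵀ) * V = 0 := by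
  rw [Matrix.sub_mul, Matrix.one_mul, Matrix.mul_assoc, hV, Matrix.mul_one, sub_self]

theorem specNorm_one_sub_mul_transpose_le_one (hV : Vᵀ * V = 1) : specNorm (1 - V * Vᵀ) ≤ 1 := by
  refine specNorm_le_one_of_transpose_mul_self_eq ?_
  rw [transpose_sub, transpose_one, transpose_mul, transpose_transpose, Matrix.sub_mul,
    Matrix.one_mul, Matrix.mul_assoc, transpose_mul_one_sub_mul_transpose hV, Matrix.mul_zero,
    sub_zero]

theorem specNorm_one_sub_mul_transpose_mul_le (hV : Vᵀ * V = 1) (M : Matrix ι κ ℝ) :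
    specNorm ((1 - V * Vᵀ) * M) ≤ specNorm M :=
  (specNorm_mul_le _ _).trans <|
    mul_le_of_le_one_left (specNorm_nonneg M) (specNorm_one_sub_mul_transpose_le_one hV)

/-- The projection `P_W` of the paper; `M - projW V₁ V₂ M` is `P_V(M)`. -/
def projW [DecidableEq κ] (V₁ : Matrix ι (Fin R) ℝ) (V₂ : Matrix κ (Fin R) ℝ) (M : Matrix ι κ ℝ) :
    Matrix ι κ ℝ :=
  (1 - V₁ * V₁ᵀ) * M * (1 - V₂ * V₂ᵀ)

variable [DecidableEq κ] {U : Matrix κ (Fin R) ℝ}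

theorem transpose_mul_projW (hV : Vᵀ * V = 1) (M : Matrix ι κ ℝ) : Vᵀ * projW V U M = 0 := by
  rw [projW, ← Matrix.mul_assoc, ← Matrix.mul_assoc, transpose_mul_one_sub_mul_transpose hV,
    Matrix.zero_mul, Matrix.zero_mul]

theorem projW_mul (hU : Uᵀ * U = 1) (M : Matrix ι κ ℝ) : projW V U M * U = 0 := by
  rw [projW, Matrix.mul_assoc, one_sub_mul_transpose_mul hU, Matrix.mul_zero]

theorem specNorm_projW_le (hV : Vᵀ * V = 1) (hU : Uᵀ * U = 1) (M : Matrix ι κ ℝ) :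
    specNorm (projW V U M) ≤ specNorm M :=
  (specNorm_mul_le _ _).trans <| (mul_le_of_le_one_right (specNorm_nonneg _)
    (specNorm_one_sub_mul_transpose_le_one hU)).trans (specNorm_one_sub_mul_transpose_mul_le hV M)

theorem sub_projW (M : Matrix ι κ ℝ) :
    M - projW V U M = V * Vᵀ * M + (1 - V * Vᵀ) * M * (U * Uᵀ) := by
  rw [projW, Matrix.mul_sub, Matrix.mul_one, Matrix.sub_mul, Matrix.one_mul]
  abel

theorem frobNorm_sub_projW_le (hV : Vᵀ * V = 1) (hU : Uᵀ * U = 1) (M : Matrix ι κ ℝ) :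
    frobNorm (M - projW V U M) ≤ 2 * √R * specNorm M := by
  have := specNorm_nonneg M
  have := frobNorm_nonneg (U * Uᵀ)
  calc frobNorm (M - projW V U M)
      ≤ frobNorm (V * Vᵀ) * specNorm M + specNorm ((1 - V * Vᵀ) * M) * frobNorm (U * Uᵀ) := by
        rw [sub_projW]
        exact (frobNorm_add_le _ _).trans (add_le_add
          (frobNorm_mul_le_frobNorm_mul_specNorm _ _) (frobNorm_mul_le_specNorm_mul_frobNorm _ _))
    _ ≤ √R * specNorm M + specNorm M * √R := by
        gcongr
        exacts [frobNorm_mul_transpose_le hV hV, specNorm_one_sub_mul_transpose_mul_le hV M,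
          frobNorm_mul_transpose_le hU hU]
    _ = 2 * √R * specNorm M := by ring

end OrthonormalColumns

/-- For `M ∈ ℝ^{n×m}` and `V₁, V₂` with orthonormal columns, there exist `λ ≥ 0` and `W`
with `V₁ᵀW = 0`, `WV₂ = 0`, `‖W‖ ≤ 1` such that `‖λ(V₁V₂ᵀ + W) - M‖_F ≤ 3√R·‖M‖`. -/
theorem stmt6 (n m R : ℕ) (M : Matrix (Fin n) (Fin m) ℝ)
    (V₁ : Matrix (Fin n) (Fin R) ℝ) (V₂ : Matrix (Fin m) (Fin R) ℝ)
    (hV₁ : V₁ᵀ * V₁ = 1) (hV₂ : V₂ᵀ * V₂ = 1) :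
    ∃ (l : ℝ) (W : Matrix (Fin n) (Fin m) ℝ),
      0 ≤ l ∧ V₁ᵀ * W = 0 ∧ W * V₂ = 0 ∧ specNorm W ≤ 1 ∧
      frobNorm (l • (V₁ * V₂ᵀ + W) - M) ≤ 3 * Real.sqrt R * specNorm M := by
  set s := specNorm M
  have hs : 0 ≤ s := specNorm_nonneg M
  have hW := specNorm_projW_le hV₁ hV₂ M
  refine ⟨s, s⁻¹ • projW V₁ V₂ M, hs, ?_, ?_, specNorm_inv_smul_le_one_of_specNorm_le hW, ?_⟩
  · rw [Matrix.mul_smul, transpose_mul_projW hV₁, smul_zero]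
  · rw [Matrix.smul_mul, projW_mul hV₂, smul_zero]
  · rw [smul_add, smul_inv_smul_of_specNorm_le hW, add_sub_assoc, ← neg_sub M, ← sub_eq_add_neg]
    calc frobNorm (s • (V₁ * V₂ᵀ) - (M - projW V₁ V₂ M))
        ≤ s * frobNorm (V₁ * V₂ᵀ) + frobNorm (M - projW V₁ V₂ M) := by
          simpa only [frobNorm_smul, abs_of_nonneg hs] using
            frobNorm_sub_le (s • (V₁ * V₂ᵀ)) (M - projW V₁ V₂ M)
      _ ≤ s * √R + 2 * √R * s := add_le_add
          (mul_le_mul_of_nonneg_left (frobNorm_mul_transpose_le hV₁ hV₂) hs)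
          (frobNorm_sub_projW_le hV₁ hV₂ M)
      _ = 3 * √R * s := by ring

end
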